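/- arXiv:2205.06790 — 3 statements merged into one kernel-verified Lean document; each statement's English description precedes it below -/
import Mathlib

section
/- For any continuous K-algebra endomorphism α of K[[x_1,...,x_n]] (continuous in the m-adic topology), the operator P_α = Σ_{i≥0} (1/i!) u^i ∂^i, where u_j = α(x_j) − x_j ∈ m, belongs to D̂_n^sym and satisfies P_α(f) = f(x_1+u_1, ..., x_n+u_n) = α(f) for every f ∈ K[[x_1,...,x_n]]. In particular every continuous K-algebra endomorphism of K[[x_1,...,x_n]] is realized by an operator of D̂_n^sym. -/
open MvPowerSeries

noncomputable section

variable {K : Type*} [Field K] [CharZero K] {n : ℕ}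

def dg {n : ℕ} (k : Fin n → ℕ) : ℕ := ∑ i, k i

def dgF {n : ℕ} (μ : Fin n →₀ ℕ) : ℕ := μ.sum fun _ e => e

abbrev Op (n : ℕ) (K : Type*) [Field K] := (Fin n → ℕ) → MvPowerSeries (Fin n) K

def ord (P : Op n K) : EReal :=
  ⨆ (k : Fin n → ℕ) (μ : Fin n →₀ ℕ) (_ : MvPowerSeries.coeff (R := K) μ (P k) ≠ 0),
    ((((dg k : ℤ) - (dgF μ : ℤ) : ℤ) : ℝ) : EReal)

/-- the iterated partial derivative `∂^j` -/
def Dmulti (j : Fin n → ℕ) (b : MvPowerSeries (Fin n) K) : MvPowerSeries (Fin n) K :=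
  fun ν => (∏ i, (((ν i + j i).factorial / (ν i).factorial : ℕ) : K)) *
    MvPowerSeries.coeff (R := K) (ν + Finsupp.equivFunOnFinite.symm j) b

/-- the action of an operator on a power series: `P(f) = Σ_k a_k ∂^k f`
(computed coefficientwise, where the sum is m-adically convergent). -/
def opApply (P : Op n K) (f : MvPowerSeries (Fin n) K) : MvPowerSeries (Fin n) K :=
  fun μ => ∑ᶠ (k : Fin n → ℕ), MvPowerSeries.coeff (R := K) μ (P k * Dmulti k f)

/-- substitution of power series with zero constant term:
`f ↦ f(u₁,…,uₙ)`, computed coefficientwise. -/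
def substF (u : Fin n → MvPowerSeries (Fin n) K) (f : MvPowerSeries (Fin n) K) :
    MvPowerSeries (Fin n) K :=
  fun μ => ∑ᶠ (p : Fin n → ℕ),
    MvPowerSeries.coeff (R := K) (Finsupp.equivFunOnFinite.symm p) f *
      MvPowerSeries.coeff (R := K) μ (∏ i, (u i) ^ (p i))

/-- the operator `P_α = Σ_k (1/k!) u^k ∂^k` with `u_j = α(x_j) − x_j`. -/
def Palpha (α : MvPowerSeries (Fin n) K →ₐ[K] MvPowerSeries (Fin n) K) : Op n K :=
  fun k => ((∏ i, ((k i).factorial) : ℕ) : K)⁻¹ •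
    ∏ i, (α (MvPowerSeries.X i) - MvPowerSeries.X i) ^ (k i)

/-! Since `uᵢ` has no constant term, `u^k` only has monomials of degree `≥ |k|`. Hence the
`μ`-th coefficient of `P_α f` and of `f(x + u)` is a finite sum, and a `K`-linear function of
the coefficients of `f` of degree `≤ |μ|`. It is therefore enough to compare the two sides on
monomials `x^q`, where `Σₖ (1/k!) u^k ∂^k x^q = Σₖ (q choose k) u^k x^(q-k) = (x + u)^q`
is the binomial theorem. -/

open Finset Finsupp

section General

variable {σ R : Type*}

theorem MvPowerSeries.coeff_mul_eq_zero_of_lt_order [Semiring R] {f : MvPowerSeries σ R}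
    (g : MvPowerSeries σ R) {d : σ →₀ ℕ} (h : ((degree d : ℕ) : ℕ∞) < f.order) :
    coeff d (f * g) = 0 :=
  coeff_of_lt_order (h.trans_le (le_self_add.trans le_order_mul))

theorem MvPowerSeries.linearMap_apply_eq_sum_coeff_smul [CommRing R] {M : Type*}
    [AddCommGroup M] [Module R M] (L : MvPowerSeries σ R →ₗ[R] M) (S : Finset (σ →₀ ℕ))
    (hL : ∀ f, (∀ p ∈ S, coeff p f = 0) → L f = 0) (f : MvPowerSeries σ R) :
    L f = ∑ p ∈ S, coeff p f • L (monomial p 1) := by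
  classical
  have hvanish : ∀ p ∈ S, coeff p (f - ∑ q ∈ S, coeff q f • monomial q 1) = 0 := by
    intro p hp
    simp [coeff_monomial, hp]
  have := hL _ hvanish
  rw [map_sub, sub_eq_zero, map_sum] at this
  simpa only [map_smul] using this

theorem MvPowerSeries.prod_X_pow_eq_monomial [Fintype σ] [CommSemiring R] (j : σ → ℕ) :
    ∏ i, (X i : MvPowerSeries σ R) ^ j i = monomial (equivFunOnFinite.symm j) 1 := by
  simp_rw [X_pow_eq, prod_monomial, prod_const_one, equivFunOnFinite_symm_eq_sum]

end General

def cube (d : ℕ) : Finset (Fin n → ℕ) := Fintype.piFinset fun _ => range (d + 1)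

theorem mem_cube_of_dg_le {d : ℕ} {k : Fin n → ℕ} (h : dg k ≤ d) : k ∈ cube d :=
  Fintype.mem_piFinset.mpr fun i => mem_range.mpr <|
    Nat.lt_succ_of_le ((single_le_sum (fun _ _ => Nat.zero_le _) (mem_univ i)).trans h)

theorem finsum_eq_sum_cube {M : Type*} [AddCommMonoid M] {F : (Fin n → ℕ) → M} {d : ℕ}
    (hF : ∀ k, d < dg k → F k = 0) : ∑ᶠ k, F k = ∑ k ∈ cube d, F k :=
  finsum_eq_sum_of_support_subset F fun k hk =>
    mem_cube_of_dg_le (not_lt.mp fun h => hk (hF k h))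

theorem dg_coe (t : Fin n →₀ ℕ) : dg ⇑t = dgF t := (degree_eq_sum t).symm

theorem dgF_equivFunOnFinite_symm (k : Fin n → ℕ) : dgF (equivFunOnFinite.symm k) = dg k :=
  degree_eq_sum _

theorem dgF_add (a b : Fin n →₀ ℕ) : dgF (a + b) = dgF a + dgF b := map_add degree a b

section PowerSeries

variable {R : Type*} [CommSemiring R]

theorem le_order_prod_pow {u : Fin n → MvPowerSeries (Fin n) R}
    (hu : ∀ i, constantCoeff (u i) = 0) (k : Fin n → ℕ) :
    (dg k : ℕ∞) ≤ (∏ i, u i ^ k i).order :=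
  calc (dg k : ℕ∞) = ∑ i, (k i : ℕ∞) := by simp only [dg, Nat.cast_sum]
    _ ≤ ∑ i, (u i ^ k i).order :=
      sum_le_sum fun i _ => le_order_pow_of_constantCoeff_eq_zero _ (hu i)
    _ ≤ (∏ i, u i ^ k i).order := le_order_prod _ _

theorem coeff_prod_pow_eq_zero {u : Fin n → MvPowerSeries (Fin n) R}
    (hu : ∀ i, constantCoeff (u i) = 0) {k : Fin n → ℕ} {μ : Fin n →₀ ℕ}
    (h : dgF μ < dg k) :
    coeff μ (∏ i, u i ^ k i) = 0 :=
  coeff_of_lt_order ((Nat.cast_lt.mpr h).trans_le (le_order_prod_pow hu k))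

theorem prod_X_add_pow_eq_sum_cube (u : Fin n → MvPowerSeries (Fin n) R) {d : ℕ}
    {q : Fin n → ℕ} (hq : q ∈ cube d) :
    ∏ i, (X i + u i) ^ q i = ∑ k ∈ cube d,
      (∏ i, (q i).choose (k i)) •
        ((∏ i, u i ^ k i) * monomial (equivFunOnFinite.symm (q - k)) 1) := by
  classical
  have hbinom : ∀ i, (X i + u i) ^ q i =
      ∑ m ∈ range (d + 1), (q i).choose m • (u i ^ m * X i ^ (q i - m)) := by
    intro i
    rw [add_comm, add_pow]
    have hqi : q i + 1 ≤ d + 1 := mem_range.mp (Fintype.mem_piFinset.mp hq i)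
    refine (sum_subset (range_subset_range.mpr hqi) fun m _ hm => ?_).trans ?_
    · rw [Nat.choose_eq_zero_of_lt (by simpa using hm), Nat.cast_zero, mul_zero]
    · exact sum_congr rfl fun m _ => by rw [nsmul_eq_mul, mul_comm]
  simp_rw [hbinom, prod_univ_sum, cube]
  refine sum_congr rfl fun k _ => ?_
  simp only [← prod_X_pow_eq_monomial, nsmul_eq_mul, prod_mul_distrib, Nat.cast_prod,
    Pi.sub_apply]

end PowerSeries

omit [CharZero K] in
theorem coeff_substF_eq_sum {v : Fin n → MvPowerSeries (Fin n) K}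
    (hv : ∀ i, constantCoeff (v i) = 0) (f : MvPowerSeries (Fin n) K) (μ : Fin n →₀ ℕ) :
    coeff μ (substF v f) = ∑ p ∈ cube (dgF μ),
      coeff (equivFunOnFinite.symm p) f * coeff μ (∏ i, v i ^ p i) :=
  finsum_eq_sum_cube fun _ h => by rw [coeff_prod_pow_eq_zero hv h, mul_zero]

omit [CharZero K] in
theorem coeff_Dmulti (k : Fin n → ℕ) (f : MvPowerSeries (Fin n) K) (ν : Fin n →₀ ℕ) :
    coeff ν (Dmulti k f) = (∏ i, (((ν i + k i).factorial / (ν i).factorial : ℕ) : K)) *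
      coeff (ν + equivFunOnFinite.symm k) f := rfl

def Dmultiₗ (k : Fin n → ℕ) : MvPowerSeries (Fin n) K →ₗ[K] MvPowerSeries (Fin n) K where
  toFun := Dmulti k
  map_add' f g := by ext ν; simp only [coeff_Dmulti, map_add, mul_add]
  map_smul' c f := by ext ν; simp only [coeff_Dmulti, coeff_smul, RingHom.id_apply]; ring

omit [CharZero K] in
theorem Dmulti_monomial (k q : Fin n → ℕ) :
    Dmulti k (monomial (equivFunOnFinite.symm q) (1 : K)) =
      ((∏ i, (q i).descFactorial (k i) : ℕ) : K) •
        monomial (equivFunOnFinite.symm (q - k)) 1 := by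
  classical
  ext ν
  rw [coeff_Dmulti, coeff_smul, coeff_monomial, coeff_monomial]
  by_cases hkq : ∀ i, k i ≤ q i
  · have hν : ν + equivFunOnFinite.symm k = equivFunOnFinite.symm q ↔
        ν = equivFunOnFinite.symm (q - k) := by
      simp only [Finsupp.ext_iff, Finsupp.coe_add, Pi.add_apply, coe_equivFunOnFinite_symm,
        Pi.sub_apply]
      exact forall_congr' fun i => by have := hkq i; omega
    rw [if_congr hν rfl rfl]
    split_ifs with h
    · subst h
      simp only [coe_equivFunOnFinite_symm, Pi.sub_apply, Nat.cast_prod]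
      refine congrArg (· * (1 : K)) (prod_congr rfl fun i _ => ?_)
      rw [Nat.sub_add_cancel (hkq i), Nat.descFactorial_eq_div (hkq i)]
    · rw [mul_zero, mul_zero]
  · obtain ⟨i, hi⟩ : ∃ i, q i < k i := by simpa using hkq
    have hne : ν + equivFunOnFinite.symm k ≠ equivFunOnFinite.symm q := fun h => by
      have := DFunLike.congr_fun h i
      simp only [Finsupp.coe_add, Pi.add_apply, coe_equivFunOnFinite_symm] at this
      omega
    have hdesc : ∏ j, (q j).descFactorial (k j) = 0 :=
      prod_eq_zero (mem_univ i) (Nat.descFactorial_eq_zero_iff_lt.mpr hi)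
    rw [if_neg hne, hdesc, Nat.cast_zero, mul_zero, zero_mul]

def taylorOp (u : Fin n → MvPowerSeries (Fin n) K) : Op n K :=
  fun k => ((∏ i, (k i).factorial : ℕ) : K)⁻¹ • ∏ i, u i ^ k i

section Taylor

variable {u : Fin n → MvPowerSeries (Fin n) K}

omit [CharZero K] in
theorem le_order_taylorOp (hu : ∀ i, constantCoeff (u i) = 0) (k : Fin n → ℕ) :
    (dg k : ℕ∞) ≤ (taylorOp u k).order :=
  (le_order_prod_pow hu k).trans le_order_smul

omit [CharZero K] in
theorem coeff_taylorOp_mul_eq_zero (hu : ∀ i, constantCoeff (u i) = 0) {k : Fin n → ℕ}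
    (g : MvPowerSeries (Fin n) K) {μ : Fin n →₀ ℕ} (h : dgF μ < dg k) :
    coeff μ (taylorOp u k * g) = 0 :=
  coeff_mul_eq_zero_of_lt_order g ((Nat.cast_lt.mpr h).trans_le (le_order_taylorOp hu k))

omit [CharZero K] in
theorem ord_taylorOp_le_zero (hu : ∀ i, constantCoeff (u i) = 0) : ord (taylorOp u) ≤ 0 := by
  refine iSup_le fun k => iSup_le fun μ => iSup_le fun hne => ?_
  have hk : dg k ≤ dgF μ := by
    by_contra! h
    exact hne (by simpa using coeff_taylorOp_mul_eq_zero hu 1 h)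
  exact_mod_cast (by omega : (dg k : ℤ) - dgF μ ≤ 0)

omit [CharZero K] in
theorem coeff_opApply_taylorOp_eq_sum (hu : ∀ i, constantCoeff (u i) = 0)
    (f : MvPowerSeries (Fin n) K) (μ : Fin n →₀ ℕ) :
    coeff μ (opApply (taylorOp u) f) =
      ∑ k ∈ cube (dgF μ), coeff μ (taylorOp u k * Dmulti k f) :=
  finsum_eq_sum_cube fun _ h => coeff_taylorOp_mul_eq_zero hu _ h

omit [CharZero K] in
theorem coeff_taylorOp_mul_Dmulti_eq_zero (hu : ∀ i, constantCoeff (u i) = 0) (k : Fin n → ℕ)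
    {f : MvPowerSeries (Fin n) K} {μ : Fin n →₀ ℕ}
    (hf : ∀ p ∈ cube (dgF μ), coeff (equivFunOnFinite.symm p) f = 0) :
    coeff μ (taylorOp u k * Dmulti k f) = 0 := by
  rw [coeff_mul]
  refine sum_eq_zero fun x hx => ?_
  rw [HasAntidiagonal.mem_antidiagonal] at hx
  by_cases h : dgF x.1 < dg k
  · rw [coeff_of_lt_order ((Nat.cast_lt.mpr h).trans_le (le_order_taylorOp hu k)), zero_mul]
  · have hmem : ⇑(x.2 + equivFunOnFinite.symm k) ∈ cube (dgF μ) := by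
      refine mem_cube_of_dg_le ?_
      rw [dg_coe, dgF_add, dgF_equivFunOnFinite_symm, ← hx, dgF_add]
      omega
    have := hf _ hmem
    rw [equivFunOnFinite_symm_coe] at this
    rw [coeff_Dmulti, this, mul_zero, mul_zero]

theorem sum_taylorOp_mul_Dmulti_monomial {d : ℕ} {q : Fin n → ℕ} (hq : q ∈ cube d) :
    ∑ k ∈ cube d, taylorOp u k * Dmulti k (monomial (equivFunOnFinite.symm q) 1) =
      ∏ i, (X i + u i) ^ q i := by
  rw [prod_X_add_pow_eq_sum_cube u hq]
  refine sum_congr rfl fun k _ => ?_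
  have hfac : ∏ i, (q i).descFactorial (k i) =
      (∏ i, (k i).factorial) * ∏ i, (q i).choose (k i) := by
    simp_rw [Nat.descFactorial_eq_factorial_mul_choose, prod_mul_distrib]
  have hne : ((∏ i, (k i).factorial : ℕ) : K) ≠ 0 :=
    Nat.cast_ne_zero.mpr (prod_ne_zero_iff.mpr fun i _ => (k i).factorial_ne_zero)
  rw [taylorOp, Dmulti_monomial, smul_mul_smul_comm, hfac, Nat.cast_mul,
    inv_mul_cancel_left₀ hne, Nat.cast_smul_eq_nsmul]

theorem coeff_opApply_taylorOp (hu : ∀ i, constantCoeff (u i) = 0)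
    (f : MvPowerSeries (Fin n) K) (μ : Fin n →₀ ℕ) :
    coeff μ (opApply (taylorOp u) f) = coeff μ (substF (fun i => X i + u i) f) := by
  let S : Finset (Fin n →₀ ℕ) := (cube (dgF μ)).map equivFunOnFinite.symm.toEmbedding
  let L₁ : MvPowerSeries (Fin n) K →ₗ[K] K :=
    ∑ k ∈ cube (dgF μ), coeff μ ∘ₗ LinearMap.mulLeft K (taylorOp u k) ∘ₗ Dmultiₗ k
  let L₂ : MvPowerSeries (Fin n) K →ₗ[K] K :=
    ∑ p ∈ cube (dgF μ), coeff μ (∏ i, (X i + u i) ^ p i) • coeff (equivFunOnFinite.symm p)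
  have hv : ∀ i, constantCoeff (X i + u i) = 0 := fun i => by
    rw [map_add, constantCoeff_X, hu, add_zero]
  have hS : ∀ p ∈ cube (dgF μ), equivFunOnFinite.symm p ∈ S :=
    fun _ hp => mem_map_of_mem _ hp
  have h₁ : ∀ g, coeff μ (opApply (taylorOp u) g) = L₁ g := fun g => by
    simp [L₁, coeff_opApply_taylorOp_eq_sum hu, Dmultiₗ]
  have h₂ : ∀ g, coeff μ (substF (fun i => X i + u i) g) = L₂ g := fun g => by
    simp [L₂, coeff_substF_eq_sum hv, mul_comm]
  have hL₁ : ∀ g, (∀ p ∈ S, coeff p g = 0) → L₁ g = 0 := fun g hg => by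
    rw [← h₁, coeff_opApply_taylorOp_eq_sum hu]
    exact sum_eq_zero fun k _ =>
      coeff_taylorOp_mul_Dmulti_eq_zero hu k fun p hp => hg _ (hS p hp)
  have hL₂ : ∀ g, (∀ p ∈ S, coeff p g = 0) → L₂ g = 0 := fun g hg => by
    rw [← h₂, coeff_substF_eq_sum hv]
    exact sum_eq_zero fun p hp => by rw [hg _ (hS p hp), zero_mul]
  rw [h₁, h₂, linearMap_apply_eq_sum_coeff_smul L₁ S hL₁,
    linearMap_apply_eq_sum_coeff_smul L₂ S hL₂, sum_map, sum_map]
  refine sum_congr rfl fun q hq => ?_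
  simp only [Equiv.coe_toEmbedding]
  rw [← h₁, ← h₂, coeff_opApply_taylorOp_eq_sum hu, coeff_substF_eq_sum hv, ← map_sum,
    sum_taylorOp_mul_Dmulti_monomial hq, Finset.sum_eq_single_of_mem q hq fun p _ hpq => by
      rw [coeff_monomial_ne (equivFunOnFinite.symm.injective.ne hpq), zero_mul],
    coeff_monomial_same, one_mul]

end Taylor

/-- If `α` is a K-algebra endomorphism of `K[[x₁,…,xₙ]]`
which is continuous in the m-adic topology — i.e. `α(xᵢ)` has zero constant
term and `α` is given by substitution of the `α(xᵢ)` — then `P_α ∈ D̂ₙ^sym`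
(finite order) and `P_α(f) = f(x₁+u₁,…,xₙ+uₙ) = α(f)` for every `f`. -/
theorem Palpha_realizes_endomorphism
    (α : MvPowerSeries (Fin n) K →ₐ[K] MvPowerSeries (Fin n) K)
    (hm : ∀ i, MvPowerSeries.constantCoeff (σ := Fin n) (R := K) (α (MvPowerSeries.X i)) = 0)
    (hc : ∀ f, α f = substF (fun i => α (MvPowerSeries.X i)) f) :
    ord (Palpha α) ≠ ⊤ ∧ ∀ f, opApply (Palpha α) f = α f := by
  have hu : ∀ i, constantCoeff (α (X i) - X i) = 0 := fun i => by
    rw [map_sub, hm i, constantCoeff_X, sub_zero]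
  have hPalpha : Palpha α = taylorOp fun i => α (X i) - X i := rfl
  rw [hPalpha]
  refine ⟨ne_top_of_le_ne_top EReal.zero_ne_top (ord_taylorOp_le_zero hu), fun f => ?_⟩
  have hsubst : (fun i => X i + (α (X i) - X i)) = fun i => α (X i) :=
    funext fun i => add_sub_cancel _ _
  ext μ
  rw [hc f, ← hsubst]
  exact coeff_opApply_taylorOp hu f μ

end
end

section
/- Let F be as in the Abhyankar setting with j(F) = 1, and define derivations Δ_i(G) := det J(F_1,...,F_{i−1}, G, F_{i+1},...,F_n). Then Δ_i(F_j) = δ_{ij} for all i, j, and consequently the derivations Δ_1,...,Δ_n pairwise commute on K[[x_1,...,x_n]]. -/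
/-!
Write `Δᵢ = ∑ₐ adj(J)ᵢₐ ∂ₐ` by Cramer's rule, so each `Δᵢ` is a derivation in the
`K[[x]]`-span of the commuting partial derivatives `∂ₐ`. The bracket of two such derivations
lies in that span again, and `[Δᵢ, Δⱼ]` kills every `F_k` because `Δᵢ(F_k) = δᵢₖ` is constant.
A derivation `∑ₐ wₐ ∂ₐ` killing all `F_k` satisfies `w J = 0`, hence `w = 0` since `det J = 1`.
-/

open MvPowerSeries

noncomputable section

variable {K : Type*} [Field K] [CharZero K] {n : ℕ}

/-- the partial derivative `∂_a` of a multivariate power series -/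
def pd (a : Fin n) (f : MvPowerSeries (Fin n) K) : MvPowerSeries (Fin n) K :=
  fun ν => ((ν a + 1 : ℕ) : K) * MvPowerSeries.coeff (ν + Finsupp.single a 1) f

/-- `Δᵢ(g) := det J(F₁,…,F_{i−1}, g, F_{i+1},…,Fₙ)`, the Jacobian determinant
with `Fᵢ` replaced by `g` -/
def Delta (F : Fin n → MvPowerSeries (Fin n) K) (i : Fin n)
    (g : MvPowerSeries (Fin n) K) : MvPowerSeries (Fin n) K :=
  Matrix.det (Matrix.of fun a b => pd a (Function.update F i g b))

end

namespace Derivation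

variable {R A : Type*} [CommRing R] [CommRing A] [Algebra R A]

theorem sum_apply {M : Type*} [AddCommMonoid M] [Module A M] [Module R M] {ι : Type*}
    (s : Finset ι) (D : ι → Derivation R A M) (a : A) : (∑ i ∈ s, D i) a = ∑ i ∈ s, D i a := by
  rw [← coeFnAddMonoidHom_apply, map_sum, Finset.sum_apply]
  rfl

theorem smul_lie (a : A) (D E : Derivation R A A) : ⁅a • D, E⁆ = a • ⁅D, E⁆ - E a • D := by
  ext b
  simp only [commutator_apply, smul_apply, smul_eq_mul, leibniz, sub_apply]
  ring

theorem lie_smul (a : A) (D E : Derivation R A A) : ⁅D, a • E⁆ = a • ⁅D, E⁆ + D a • E := by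
  rw [← lie_skew, smul_lie, ← lie_skew E D]
  simp only [smul_neg]
  abel

theorem lie_mem_span_of_lie_eq_zero {ι : Type*} (d : ι → Derivation R A A)
    (hd : ∀ a b, ⁅d a, d b⁆ = 0) {D E : Derivation R A A}
    (hD : D ∈ Submodule.span A (Set.range d)) (hE : E ∈ Submodule.span A (Set.range d)) :
    ⁅D, E⁆ ∈ Submodule.span A (Set.range d) := by
  set S := Submodule.span A (Set.range d)
  have hdS : ∀ a, d a ∈ S := fun a => Submodule.subset_span ⟨a, rfl⟩
  have hgen : ∀ a, ∀ E ∈ S, ⁅d a, E⁆ ∈ S := fun a E hE => by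
    induction hE using Submodule.span_induction with
    | mem _ hE => obtain ⟨b, rfl⟩ := hE; simp [hd]
    | zero => simp
    | add _ _ _ _ h₁ h₂ => rw [lie_add]; exact S.add_mem h₁ h₂
    | smul c _ hE h => rw [lie_smul]; exact S.add_mem (S.smul_mem c h) (S.smul_mem _ hE)
  induction hD using Submodule.span_induction with
  | mem _ hD => obtain ⟨a, rfl⟩ := hD; exact hgen a E hE
  | zero => simp
  | add _ _ _ _ h₁ h₂ => rw [add_lie]; exact S.add_mem h₁ h₂
  | smul c D hD h => rw [smul_lie]; exact S.sub_mem (S.smul_mem c h) (S.smul_mem _ hD)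

theorem eq_zero_of_mem_span_of_apply_eq_zero {ι : Type*} [Fintype ι] [DecidableEq ι]
    (d : ι → Derivation R A A) (F : ι → A) (hJ : IsUnit (Matrix.of fun a k => d a (F k)).det)
    {D : Derivation R A A} (hD : D ∈ Submodule.span A (Set.range d)) (hDF : ∀ k, D (F k) = 0) :
    D = 0 := by
  obtain ⟨w, rfl⟩ := (Submodule.mem_span_range_iff_exists_fun A).mp hD
  have hw : Matrix.vecMul w (.of fun a k => d a (F k))
      = Matrix.vecMul 0 (.of fun a k => d a (F k)) := by
    ext k
    simpa [Matrix.vecMul, dotProduct, sum_apply] using hDF k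
  obtain rfl : w = 0 :=
    Matrix.vecMul_injective_of_isUnit ((Matrix.isUnit_iff_isUnit_det _).mpr hJ) hw
  simp

end Derivation

theorem MvPowerSeries.pderiv_lie_pderiv {σ R : Type*} [CommRing R] (a b : σ) :
    ⁅pderiv R a, pderiv R b⁆ = (0 : Derivation R (MvPowerSeries σ R) _) := by
  ext f ν
  simp only [Derivation.commutator_apply, map_sub, coeff_pderiv, Derivation.zero_apply,
    map_zero, add_right_comm ν (Finsupp.single a 1)]
  rcases eq_or_ne a b with rfl | hab
  · simp
  · simp [hab, hab.symm]
    ring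

section

variable {K : Type*} [Field K] {n : ℕ}

theorem pd_eq_pderiv (a : Fin n) : (pd a : MvPowerSeries (Fin n) K → _) = pderiv K a := by
  funext f
  ext ν
  rw [coeff_pderiv]
  change ((ν a + 1 : ℕ) : K) * _ = _
  push_cast
  ring

noncomputable def deltaDerivation (F : Fin n → MvPowerSeries (Fin n) K) (i : Fin n) :
    Derivation K (MvPowerSeries (Fin n) K) (MvPowerSeries (Fin n) K) :=
  ∑ a, (Matrix.of fun a b => pd a (F b)).adjugate i a • pderiv K a

theorem deltaDerivation_mem_span (F : Fin n → MvPowerSeries (Fin n) K) (i : Fin n) :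
    deltaDerivation F i ∈ Submodule.span (MvPowerSeries (Fin n) K) (Set.range (pderiv K)) :=
  Submodule.sum_mem _ fun a _ => Submodule.smul_mem _ _ (Submodule.subset_span ⟨a, rfl⟩)

theorem deltaDerivation_apply (F : Fin n → MvPowerSeries (Fin n) K) (i : Fin n)
    (g : MvPowerSeries (Fin n) K) : deltaDerivation F i g = Delta F i g := by
  have hcol : (Matrix.of fun a b => pd a (Function.update F i g b))
      = (Matrix.of fun a b => pd a (F b)).updateCol i (fun a => pd a g) := by
    ext a b
    rcases eq_or_ne b i with rfl | hb <;> simp [*]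
  rw [Delta, hcol, ← Matrix.cramer_apply, Matrix.cramer_eq_adjugate_mulVec]
  simp [deltaDerivation, Derivation.sum_apply, Matrix.mulVec, dotProduct, pd_eq_pderiv]

theorem Delta_apply_component (F : Fin n → MvPowerSeries (Fin n) K)
    (hjac : Matrix.det (Matrix.of fun a b => pd a (F b)) = 1) (i j : Fin n) :
    Delta F i (F j) = if i = j then 1 else 0 := by
  rcases eq_or_ne i j with rfl | hij
  · rw [if_pos rfl, Delta, Function.update_eq_self, hjac]
  · rw [if_neg hij, Delta]
    exact Matrix.det_zero_of_column_eq hij fun a => by simp [Function.update_of_ne hij.symm]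

end

noncomputable section

variable {K : Type*} [Field K] [CharZero K] {n : ℕ}

theorem Delta_eq_delta_and_commute_general
    (F : Fin n → MvPowerSeries (Fin n) K)
    (hjac : Matrix.det (Matrix.of fun a b => pd a (F b)) = (1 : MvPowerSeries (Fin n) K)) :
    (∀ i j, Delta F i (F j) = if i = j then 1 else 0) ∧
    (∀ i j (g : MvPowerSeries (Fin n) K),
      Delta F i (Delta F j g) = Delta F j (Delta F i g)) := by
  have hF := Delta_apply_component F hjac
  refine ⟨hF, fun i j g => ?_⟩
  have hJ : IsUnit (Matrix.of fun a k => pderiv K a (F k)).det := by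
    simp only [← pd_eq_pderiv, hjac, isUnit_one]
  have hbracket : ⁅deltaDerivation F i, deltaDerivation F j⁆ = 0 := by
    refine Derivation.eq_zero_of_mem_span_of_apply_eq_zero _ F hJ
      (Derivation.lie_mem_span_of_lie_eq_zero _ pderiv_lie_pderiv
        (deltaDerivation_mem_span F i) (deltaDerivation_mem_span F j)) fun k => ?_
    rw [Derivation.commutator_apply, deltaDerivation_apply F i (F k),
      deltaDerivation_apply F j (F k), hF, hF]
    split_ifs <;> simp
  simpa [Derivation.commutator_apply, deltaDerivation_apply, sub_eq_zero] using
    congr($hbracket g)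

/-- If `Fᵢ(0) = 0` and `j(F) = det(∂_a F_b) = 1`, then
`Δᵢ(F_j) = δ_{ij}` for all `i, j`, and the derivations `Δ₁,…,Δₙ` pairwise
commute on `K[[x₁,…,xₙ]]`. -/
theorem Delta_eq_delta_and_commute
    (F : Fin n → MvPowerSeries (Fin n) K)
    (hF0 : ∀ i, MvPowerSeries.constantCoeff (F i) = 0)
    (hjac : Matrix.det (Matrix.of fun a b => pd a (F b)) = (1 : MvPowerSeries (Fin n) K)) :
    (∀ i j, Delta F i (F j) = if i = j then 1 else 0) ∧
    (∀ i j (g : MvPowerSeries (Fin n) K),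
      Delta F i (Delta F j g) = Delta F j (Delta F i g)) :=
  Delta_eq_delta_and_commute_general F hjac

end
end

section
/- In the ring E_1 = K[[x]]((∂^{−1})) of formal pseudodifferential operators in one variable: for any monic operator P = ∂^ℓ + p_{ℓ−1}∂^{ℓ−1} + ... with ℓ ≥ 1 and coefficients in K[[x]], there exists a unique monic operator L = ∂ + u_0 + u_{−1}∂^{−1} + ... with L^ℓ = P. -/
/-!
STATEMENT 11: In `E₁ = K[[x]]((∂⁻¹))` (formal pseudodifferential operators in
one variable, multiplication extending `∂⁻¹ a = Σ_{k≥0} (−1)^k a^{(k)} ∂^{−1−k}`):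
every monic operator `P = ∂^ℓ + p_{ℓ−1}∂^{ℓ−1} + ⋯` with `ℓ ≥ 1` has a unique
monic `ℓ`-th root `L = ∂ + u₀ + u₋₁∂⁻¹ + ⋯` with `L^ℓ = P`.
-/

noncomputable section

variable {K : Type*} [Field K] [CharZero K]

/-- elements of `E₁`: formal sums `Σ_{s∈ℤ} a_s ∂^s`, `a_s ∈ K[[x]]`,
with support bounded above -/
abbrev E1 (K : Type*) [Field K] := ℤ → PowerSeries K

/-- the formal derivative on `K[[x]]` -/
def d1 (f : PowerSeries K) : PowerSeries K :=
  PowerSeries.mk fun μ => ((μ + 1 : ℕ) : K) * PowerSeries.coeff (R := K) (μ + 1) f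

/-- generalized binomial coefficient `C(s,t) = s(s−1)⋯(s−t+1)/t!`, `s ∈ ℤ`;
`C(−1,t) = (−1)^t` recovers `∂⁻¹ a = Σ (−1)^k a^{(k)} ∂^{−1−k}`. -/
def zchoose (s : ℤ) (t : ℕ) : K :=
  (∏ r ∈ Finset.range t, ((s : K) - r)) * ((t.factorial : K))⁻¹

/-- the product in `E₁`: `(Σ a_i ∂^i)(Σ b_l ∂^l)` with
`∂^i b = Σ_{t≥0} C(i,t) b^{(t)} ∂^{i−t}`, computed coefficientwise -/
def mulE1 (P Q : E1 K) : E1 K :=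
  fun s => PowerSeries.mk fun μ =>
    ∑ᶠ (i : ℤ) (t : ℕ),
      zchoose (K := K) i t * PowerSeries.coeff (R := K) μ (P i * d1^[t] (Q (s - i + t)))

open Classical in
/-- the identity operator of `E₁` -/
def oneE1 : E1 K := fun s => if s = 0 then 1 else 0

/-- powers in `E₁` -/
def powE1 (L : E1 K) : ℕ → E1 K
  | 0 => oneE1
  | q + 1 => mulE1 L (powE1 L q)

/-!
Everything rests on one perturbation estimate: if `L, L'` are monic of order `1` and
`L - L' = c ∂^m + (lower)`, then `L^q - L'^q = q c ∂^(m+q-1) + (lower)`, by induction from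
`L^(q+1) - L'^(q+1) = (L - L') L^q + L' (L^q - L'^q)`.
Since `ℓ` is invertible, the top term of `L - L'` would survive in `L^ℓ - L'^ℓ = 0`: this gives
uniqueness. For existence the coefficients of `L` are found one at a time: if the `ℓ`-th power of
an approximation differs from `P` by `r ∂^(ℓ-1-n) + (lower)`, adding `ℓ⁻¹ r ∂^(-n)` kills that
term, and the approximations stabilise coefficientwise to a root.
-/

section

variable {F : Type*} [Field F]

def OrderLE (A : E1 F) (a : ℤ) : Prop := ∀ s : ℤ, a < s → A s = 0

/-- `c` may be `0`: then this only says that `A` has order at most `a`. -/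
def HasLeadingCoeff (A : E1 F) (a : ℤ) (c : PowerSeries F) : Prop := A a = c ∧ OrderLE A a

lemma OrderLE.mono {A : E1 F} {a b : ℤ} (h : OrderLE A a) (hab : a ≤ b) : OrderLE A b :=
  fun s hs => h s (hab.trans_lt hs)

lemma OrderLE.add {A B : E1 F} {a : ℤ} (hA : OrderLE A a) (hB : OrderLE B a) :
    OrderLE (A + B) a := fun s hs => by simp [hA s hs, hB s hs]

lemma OrderLE.sub {A B : E1 F} {a : ℤ} (hA : OrderLE A a) (hB : OrderLE B a) :
    OrderLE (A - B) a := fun s hs => by simp [hA s hs, hB s hs]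

lemma orderLE_single (a : ℤ) (c : PowerSeries F) : OrderLE (Pi.single a c) a :=
  fun _ hs => Pi.single_eq_of_ne hs.ne' (M := fun _ => PowerSeries F) c

lemma eq_zero_of_forall_orderLE_sub {A : E1 F} (c : ℤ) (h : ∀ n : ℕ, OrderLE A (c - n)) :
    A = 0 := by
  funext s
  exact h (c - s + 1).toNat s (by omega)

lemma HasLeadingCoeff.add {A B : E1 F} {a : ℤ} {c d : PowerSeries F}
    (hA : HasLeadingCoeff A a c) (hB : HasLeadingCoeff B a d) :
    HasLeadingCoeff (A + B) a (c + d) :=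
  ⟨by rw [Pi.add_apply, hA.1, hB.1], hA.2.add hB.2⟩

lemma HasLeadingCoeff.sub {A B : E1 F} {a : ℤ} {c d : PowerSeries F}
    (hA : HasLeadingCoeff A a c) (hB : HasLeadingCoeff B a d) :
    HasLeadingCoeff (A - B) a (c - d) :=
  ⟨by rw [Pi.sub_apply, hA.1, hB.1], hA.2.sub hB.2⟩

lemma HasLeadingCoeff.orderLE_pred {A : E1 F} {a : ℤ} (h : HasLeadingCoeff A a 0) :
    OrderLE A (a - 1) := fun s hs => by
  obtain rfl | hs := (show a ≤ s by omega).eq_or_lt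
  exacts [h.1, h.2 s hs]

lemma HasLeadingCoeff.orderLE_sub {A B : E1 F} {a : ℤ} {c : PowerSeries F}
    (hA : HasLeadingCoeff A a c) (hB : HasLeadingCoeff B a c) : OrderLE (A - B) (a - 1) :=
  (sub_self c ▸ hA.sub hB).orderLE_pred

lemma d1_sub (f g : PowerSeries F) : d1 (f - g) = d1 f - d1 g := by
  ext μ; simp [d1, mul_sub]

lemma iterate_d1_sub (t : ℕ) (f g : PowerSeries F) :
    d1^[t] (f - g) = d1^[t] f - d1^[t] g := by
  induction t with
  | zero => rfl
  | succ t ih => simp only [Function.iterate_succ_apply', ih, d1_sub]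

lemma iterate_d1_zero (t : ℕ) : d1^[t] (0 : PowerSeries F) = 0 := by
  simpa using iterate_d1_sub t (0 : PowerSeries F) 0

lemma mulE1_apply_eq_sum (A B : E1 F) (s : ℤ) (S : Finset (ℤ × ℕ))
    (hS : ∀ i t, A i * d1^[t] (B (s - i + t)) ≠ 0 → (i, t) ∈ S) :
    mulE1 A B s =
      ∑ p ∈ S, zchoose (K := F) p.1 p.2 • (A p.1 * d1^[p.2] (B (s - p.1 + p.2))) := by
  ext μ
  set g : ℤ × ℕ → F := fun p =>
    zchoose (K := F) p.1 p.2 * PowerSeries.coeff μ (A p.1 * d1^[p.2] (B (s - p.1 + p.2)))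
  have hg : Function.support g ⊆ S := fun p hp =>
    hS p.1 p.2 fun h => hp (by simp [g, h])
  rw [mulE1, PowerSeries.coeff_mk, ← finsum_curry g (S.finite_toSet.subset hg),
    finsum_eq_finsetSum_of_support_subset g hg, map_sum]
  simp [g]

lemma zchoose_zero (i : ℤ) : zchoose (K := F) i 0 = 1 := by
  simp [zchoose]

lemma le_of_mulE1_term_ne_zero {A B : E1 F} {a b i j : ℤ} {t : ℕ} (hA : OrderLE A a)
    (hB : OrderLE B b) (h : A i * d1^[t] (B j) ≠ 0) : i ≤ a ∧ j ≤ b := by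
  by_contra! hij
  by_cases hi : a < i
  · exact h (by rw [hA i hi, zero_mul])
  · exact h (by rw [hB j (hij (not_lt.mp hi)), iterate_d1_zero, mul_zero])

lemma mulE1_sub_mulE1 {A A' B B' : E1 F} {a b : ℤ} (hA : OrderLE A a) (hA' : OrderLE A' a)
    (hB : OrderLE B b) (hB' : OrderLE B' b) :
    mulE1 A B - mulE1 A' B' = mulE1 (A - A') B + mulE1 A' (B - B') := by
  funext s
  set S := Finset.Icc (s - b) a ×ˢ Finset.range ((a + b - s).toNat + 1)
  have hS : ∀ {C D : E1 F}, OrderLE C a → OrderLE D b →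
      ∀ i t, C i * d1^[t] (D (s - i + t)) ≠ 0 → (i, t) ∈ S := by
    intro C D hC hD i t h
    obtain ⟨hi, hj⟩ := le_of_mulE1_term_ne_zero hC hD h
    simp only [S, Finset.mem_product, Finset.mem_Icc, Finset.mem_range]
    omega
  rw [Pi.sub_apply, Pi.add_apply, mulE1_apply_eq_sum _ _ s S (hS hA hB),
    mulE1_apply_eq_sum _ _ s S (hS hA' hB'), mulE1_apply_eq_sum _ _ s S (hS (hA.sub hA') hB),
    mulE1_apply_eq_sum _ _ s S (hS hA' (hB.sub hB')), ← Finset.sum_sub_distrib,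
    ← Finset.sum_add_distrib]
  refine Finset.sum_congr rfl fun p _ => ?_
  rw [Pi.sub_apply, Pi.sub_apply, iterate_d1_sub, ← smul_sub, ← smul_add]
  ring_nf

lemma HasLeadingCoeff.mulE1 {A B : E1 F} {a b : ℤ} {c d : PowerSeries F}
    (hA : HasLeadingCoeff A a c) (hB : HasLeadingCoeff B b d) :
    HasLeadingCoeff (mulE1 A B) (a + b) (c * d) := by
  have hterm : ∀ s i t, a + b ≤ s → A i * d1^[t] (B (s - i + t)) ≠ 0 →
      i = a ∧ t = 0 ∧ s = a + b := by
    intro s i t hs h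
    have := le_of_mulE1_term_ne_zero hA.2 hB.2 h
    omega
  refine ⟨?_, fun s hs => ?_⟩
  · rw [mulE1_apply_eq_sum A B _ {(a, 0)} fun i t h => by
      obtain ⟨rfl, rfl, -⟩ := hterm _ i t le_rfl h; exact Finset.mem_singleton_self _]
    simp [hA.1, hB.1, zchoose_zero]
  · rw [mulE1_apply_eq_sum A B s ∅ fun i t h => absurd (hterm s i t hs.le h).2.2 hs.ne',
      Finset.sum_empty]

lemma hasLeadingCoeff_oneE1 : HasLeadingCoeff (oneE1 (K := F)) 0 1 :=
  ⟨by simp [oneE1], fun s hs => by simp [oneE1, hs.ne']⟩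

lemma HasLeadingCoeff.powE1 {L : E1 F} {a : ℤ} {c : PowerSeries F} (h : HasLeadingCoeff L a c)
    (q : ℕ) : HasLeadingCoeff (powE1 L q) (q * a) (c ^ q) := by
  induction q with
  | zero => simpa [_root_.powE1] using hasLeadingCoeff_oneE1
  | succ q ih =>
    rw [pow_succ', show ((q + 1 : ℕ) : ℤ) * a = a + q * a by push_cast; ring]
    exact h.mulE1 ih

lemma hasLeadingCoeff_powE1_sub_powE1 {L L' : E1 F} {m : ℤ} {c : PowerSeries F}
    (hL : HasLeadingCoeff L 1 1) (hL' : HasLeadingCoeff L' 1 1)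
    (h : HasLeadingCoeff (L - L') m c) (q : ℕ) :
    HasLeadingCoeff (powE1 L q - powE1 L' q) (m + q - 1) (q • c) := by
  induction q with
  | zero => exact ⟨by simp [powE1], fun s _ => by simp [powE1]⟩
  | succ q ih =>
    have hQ := hL.powE1 q
    have hQ' := hL'.powE1 q
    simp only [mul_one, one_pow] at hQ hQ'
    have h1 := h.mulE1 hQ
    have h2 := hL'.mulE1 ih
    rw [show 1 + (m + q - 1) = m + q by ring] at h2
    change HasLeadingCoeff (mulE1 L (powE1 L q) - mulE1 L' (powE1 L' q)) _ _
    rw [mulE1_sub_mulE1 hL.2 hL'.2 hQ.2 hQ'.2]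
    convert h1.add h2 using 1
    · push_cast; ring
    · rw [mul_one, one_mul, succ_nsmul']

lemma eq_of_powE1_eq {L L' : E1 F} {ℓ : ℕ} (hℓ : (ℓ : F) ≠ 0) (hL : HasLeadingCoeff L 1 1)
    (hL' : HasLeadingCoeff L' 1 1) (h : powE1 L ℓ = powE1 L' ℓ) : L = L' := by
  rw [← sub_eq_zero]
  refine eq_zero_of_forall_orderLE_sub 0 fun n => ?_
  induction n with
  | zero => simpa using hL.orderLE_sub hL'
  | succ n ih =>
    have hkey := (hasLeadingCoeff_powE1_sub_powE1 hL hL' ⟨rfl, ih⟩ ℓ).1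
    rw [h, sub_self, Pi.zero_apply, eq_comm, ← Nat.cast_smul_eq_nsmul F] at hkey
    have hn : HasLeadingCoeff (L - L') (0 - n) 0 := ⟨(smul_eq_zero.mp hkey).resolve_left hℓ, ih⟩
    exact hn.orderLE_pred.mono (by omega)

def monicRootApprox (P : E1 F) (ℓ : ℕ) : ℕ → E1 F
  | 0 => Pi.single 1 1
  | n + 1 => monicRootApprox P ℓ n +
      Pi.single (-n : ℤ) ((ℓ : F)⁻¹ • (P - powE1 (monicRootApprox P ℓ n) ℓ) (ℓ - 1 - n))

lemma hasLeadingCoeff_monicRootApprox (P : E1 F) (ℓ n : ℕ) :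
    HasLeadingCoeff (monicRootApprox P ℓ n) 1 1 := by
  induction n with
  | zero => exact ⟨Pi.single_eq_same _ _, orderLE_single _ _⟩
  | succ n ih =>
    rw [← add_zero (1 : PowerSeries F)]
    exact ih.add ⟨Pi.single_eq_of_ne (by omega) _, (orderLE_single _ _).mono (by omega)⟩

lemma orderLE_sub_powE1_monicRootApprox {P : E1 F} {ℓ : ℕ} (hℓ : (ℓ : F) ≠ 0)
    (hP : HasLeadingCoeff P ℓ 1) (n : ℕ) :
    OrderLE (P - powE1 (monicRootApprox P ℓ n) ℓ) (ℓ - 1 - n) := by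
  induction n with
  | zero =>
    simpa using hP.orderLE_sub (by simpa using (hasLeadingCoeff_monicRootApprox P ℓ 0).powE1 ℓ)
  | succ n ih =>
    set c := (P - powE1 (monicRootApprox P ℓ n) ℓ) (ℓ - 1 - n)
    have hD : HasLeadingCoeff (monicRootApprox P ℓ (n + 1) - monicRootApprox P ℓ n) (-n)
        ((ℓ : F)⁻¹ • c) := by
      rw [monicRootApprox, add_sub_cancel_left]
      exact ⟨Pi.single_eq_same _ _, orderLE_single _ _⟩
    have hkey := hasLeadingCoeff_powE1_sub_powE1 (hasLeadingCoeff_monicRootApprox P ℓ _)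
      (hasLeadingCoeff_monicRootApprox P ℓ _) hD ℓ
    rw [← Nat.cast_smul_eq_nsmul F, smul_smul, mul_inv_cancel₀ hℓ, one_smul,
      show -(n : ℤ) + ℓ - 1 = ℓ - 1 - n by ring] at hkey
    have h0 := HasLeadingCoeff.orderLE_sub ⟨rfl, ih⟩ hkey
    rw [sub_sub_sub_cancel_right] at h0
    exact h0.mono (by omega)

lemma monicRootApprox_apply_of_le (P : E1 F) (ℓ : ℕ) {n m : ℕ} (hnm : n ≤ m) {s : ℤ}
    (hs : -(n : ℤ) < s) : monicRootApprox P ℓ m s = monicRootApprox P ℓ n s := by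
  induction m, hnm using Nat.le_induction with
  | base => rfl
  | succ m hnm ih =>
    rw [monicRootApprox, Pi.add_apply, Pi.single_eq_of_ne (by omega), add_zero, ih]

def monicRoot (P : E1 F) (ℓ : ℕ) : E1 F := fun s => monicRootApprox P ℓ (1 - s).toNat s

lemma orderLE_monicRoot_sub_monicRootApprox (P : E1 F) (ℓ n : ℕ) :
    OrderLE (monicRoot P ℓ - monicRootApprox P ℓ n) (-n) := fun s hs => by
  rw [Pi.sub_apply, sub_eq_zero, monicRoot]
  rcases le_total (1 - s).toNat n with h | h
  · exact (monicRootApprox_apply_of_le P ℓ h (by omega)).symm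
  · exact monicRootApprox_apply_of_le P ℓ h hs

lemma hasLeadingCoeff_monicRoot (P : E1 F) (ℓ : ℕ) : HasLeadingCoeff (monicRoot P ℓ) 1 1 := by
  have h0 := hasLeadingCoeff_monicRootApprox P ℓ 0
  have heq : ∀ s : ℤ, 0 < s → monicRoot P ℓ s = monicRootApprox P ℓ 0 s := fun s hs =>
    sub_eq_zero.mp (orderLE_monicRoot_sub_monicRootApprox P ℓ 0 s (by simpa using hs))
  exact ⟨(heq 1 one_pos).trans h0.1, fun s hs => (heq s (by omega)).trans (h0.2 s hs)⟩

lemma powE1_monicRoot {P : E1 F} {ℓ : ℕ} (hℓ : (ℓ : F) ≠ 0) (hP : HasLeadingCoeff P ℓ 1) :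
    powE1 (monicRoot P ℓ) ℓ = P := by
  rw [eq_comm, ← sub_eq_zero]
  refine eq_zero_of_forall_orderLE_sub (ℓ - 1) fun n => ?_
  have hP_sub := orderLE_sub_powE1_monicRootApprox hℓ hP n
  have hroot_sub := (hasLeadingCoeff_powE1_sub_powE1 (hasLeadingCoeff_monicRoot P ℓ)
    (hasLeadingCoeff_monicRootApprox P ℓ n)
    ⟨rfl, orderLE_monicRoot_sub_monicRootApprox P ℓ n⟩ ℓ).2
  rw [← sub_sub_sub_cancel_right P _ (powE1 (monicRootApprox P ℓ n) ℓ)]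
  exact hP_sub.sub (hroot_sub.mono (by omega))

end

/-- Every monic `P = ∂^ℓ + p_{ℓ−1}∂^{ℓ−1} + ⋯ ∈ E₁` with
`ℓ ≥ 1` has a unique monic root `L = ∂ + u₀ + u₋₁∂⁻¹ + ⋯` with `L^ℓ = P`. -/
theorem exists_unique_monic_root (ℓ : ℕ) (hℓ : 1 ≤ ℓ) (P : E1 K)
    (hmonic : P (ℓ : ℤ) = 1) (hsupp : ∀ s : ℤ, (ℓ : ℤ) < s → P s = 0) :
    ∃! L : E1 K, ((L 1 = 1 ∧ ∀ s : ℤ, 1 < s → L s = 0) ∧ powE1 L ℓ = P) := by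
  have hℓK : (ℓ : K) ≠ 0 := Nat.cast_ne_zero.mpr (by omega)
  have hP : HasLeadingCoeff P ℓ 1 := ⟨hmonic, hsupp⟩
  refine ⟨monicRoot P ℓ, ⟨hasLeadingCoeff_monicRoot P ℓ, powE1_monicRoot hℓK hP⟩, fun L hL => ?_⟩
  exact eq_of_powE1_eq hℓK hL.1 (hasLeadingCoeff_monicRoot P ℓ)
    (hL.2.trans (powE1_monicRoot hℓK hP).symm)

end
end
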